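/- Let a ∈ H be given by a(i,j) = 1 iff j = 0, and for n < ω let b_n ∈ H be given by b_n(i,j) = 1 iff j = n+1. Then for every n < ω, the orbit o(a/{b_0,…,b_n}) is nowhere dense in the orbit o(a/{b_0,…,b_{n−1}}) (with the subspace topology from (H, d_H)), and a is nm-dependent on {b_0,…,b_n} over {b_0,…,b_{n−1}}. -/

import Mathlib

open scoped ENNReal

/-- The weight of a point `(i,j) ∈ ℕ × ℕ`: `2 · 3^{-(i+1)}`. -/
noncomputable def wt (p : ℕ × ℕ) : ℝ≥0∞ := 2 * ((3 : ℝ≥0∞) ^ (p.1 + 1))⁻¹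

/-- `‖S‖ = Σ_{(i,j) ∈ S} 2 · 3^{-(i+1)} ∈ [0,∞]` for `S ⊆ ℕ × ℕ`. -/
noncomputable def nrmS (S : Set (ℕ × ℕ)) : ℝ≥0∞ := ∑' p, S.indicator wt p

lemma nrmS_mono {S T : Set (ℕ × ℕ)} (h : S ⊆ T) : nrmS S ≤ nrmS T :=
  ENNReal.tsum_le_tsum fun p =>
    Set.indicator_le_indicator_of_subset h (fun _ => by simp) p

lemma nrmS_union_le (S T : Set (ℕ × ℕ)) : nrmS (S ∪ T) ≤ nrmS S + nrmS T := by
  rw [nrmS, nrmS, nrmS, ← ENNReal.tsum_add]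
  refine ENNReal.tsum_le_tsum fun p => ?_
  by_cases hS : p ∈ S
  · refine le_trans ?_ (le_add_right le_rfl)
    rw [Set.indicator_of_mem (Set.mem_union_left _ hS), Set.indicator_of_mem hS]
  · by_cases hT : p ∈ T
    · refine le_trans ?_ (le_add_left le_rfl)
      rw [Set.indicator_of_mem (Set.mem_union_right _ hT), Set.indicator_of_mem hT]
    · rw [Set.indicator_of_notMem (fun hc => hc.elim hS hT)]
      exact zero_le

lemma nrmS_empty : nrmS ∅ = 0 := by simp [nrmS]

/-- The support of `z : ℕ × ℕ → ZMod 2`. -/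
def suppZ (z : ℕ × ℕ → ZMod 2) : Set (ℕ × ℕ) := {p | z p = 1}

/-- `‖z‖` for `z : ℕ × ℕ → ZMod 2`. -/
noncomputable def nrmZ (z : ℕ × ℕ → ZMod 2) : ℝ≥0∞ := nrmS (suppZ z)

/-- `H = {z : ℕ × ℕ → ZMod 2 | ‖z‖ < ∞}`, as an (additive) subgroup of the product group
`ℕ × ℕ → ZMod 2` with pointwise addition mod 2. -/
noncomputable def Hgrp : AddSubgroup ((ℕ × ℕ) → ZMod 2) where
  carrier := {z | nrmZ z < ⊤}
  zero_mem' := by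
    have h : suppZ 0 = ∅ := by ext p; simp [suppZ]
    simp [nrmZ, h, nrmS_empty]
  add_mem' {z w} hz hw := by
    have hsub : suppZ (z + w) ⊆ suppZ z ∪ suppZ w := by
      intro p hp
      by_contra hc
      simp only [Set.mem_union, suppZ, Set.mem_setOf_eq, not_or] at hc
      have hdi : ∀ x : ZMod 2, x = 0 ∨ x = 1 := by decide
      have hz0 : z p = 0 := (hdi (z p)).resolve_right hc.1
      have hw0 : w p = 0 := (hdi (w p)).resolve_right hc.2
      have hp' : (z + w) p = 1 := hp
      rw [Pi.add_apply, hz0, hw0] at hp'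
      exact absurd hp' (by decide)
    calc nrmZ (z + w) ≤ nrmS (suppZ z ∪ suppZ w) := nrmS_mono hsub
      _ ≤ nrmZ z + nrmZ w := nrmS_union_le _ _
      _ < ⊤ := ENNReal.add_lt_top.2 ⟨hz, hw⟩
  neg_mem' {z} hz := by
    have h : suppZ (-z) = suppZ z := by
      ext p; simp [suppZ, CharTwo.neg_eq]
    simpa [nrmZ, h] using hz
/-- `φ(x) = Σ_i 2 · x i · 3^{-(i+1)}`, the standard map from `2^ℕ` onto the ternary Cantor
set (values of `x` read as `0, 1` in `ℝ`). -/
noncomputable def phiC (x : ℕ → ZMod 2) : ℝ :=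
  ∑' i, 2 * ((x i).val : ℝ) * ((3 : ℝ) ^ (i + 1))⁻¹

/-- The metric on `H`: `d_H(z,w) = Σ_j |φ(z(·,j)) − φ(w(·,j))|`, the `ℓ¹`-distance between
the corresponding points of `C^ℕ ∩ ℓ¹`. -/
noncomputable def dH (z w : ↥Hgrp) : ℝ :=
  ∑' j, |phiC (fun i => (z : (ℕ × ℕ) → ZMod 2) (i, j)) -
          phiC (fun i => (w : (ℕ × ℕ) → ZMod 2) (i, j))|

/-- The support of a permutation `g` of `ℕ × ℕ`. -/
def suppP (g : Equiv.Perm (ℕ × ℕ)) : Set (ℕ × ℕ) := {p | g p ≠ p}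

lemma suppP_inv (g : Equiv.Perm (ℕ × ℕ)) : suppP g⁻¹ = suppP g := by
  ext p
  simp only [suppP, Set.mem_setOf_eq, ne_eq]
  constructor
  · intro h hc
    exact h (by conv_lhs => rw [← hc]; simp ; )
  · intro h hc
    exact h (by conv_lhs => rw [← hc]; simp)

/-- `G = {g ∈ Sym(ℕ × ℕ) | ‖supp g‖ < ∞}`, as a subgroup of the symmetric group of
`ℕ × ℕ`. -/
noncomputable def Ggrp : Subgroup (Equiv.Perm (ℕ × ℕ)) where
  carrier := {g | nrmS (suppP g) < ⊤}
  one_mem' := by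
    have h : suppP 1 = ∅ := by ext p; simp [suppP]
    simp [h, nrmS_empty]
  mul_mem' {f g} hf hg := by
    have hsub : suppP (f * g) ⊆ suppP f ∪ suppP g := by
      intro p hp
      by_contra hc
      simp only [Set.mem_union, suppP, Set.mem_setOf_eq, ne_eq, not_or, not_not] at hc
      exact hp (by simp only [suppP, Set.mem_setOf_eq, Equiv.Perm.mul_apply, hc.2, hc.1] at *)
    calc nrmS (suppP (f * g)) ≤ nrmS (suppP f ∪ suppP g) := nrmS_mono hsub
      _ ≤ nrmS (suppP f) + nrmS (suppP g) := nrmS_union_le _ _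
      _ < ⊤ := ENNReal.add_lt_top.2 ⟨hf, hg⟩
  inv_mem' {g} hg := by simpa [suppP_inv] using hg

/-- The metric on `G`: `d(f,g) = ‖supp (f⁻¹ ∘ g)‖`. -/
noncomputable def dG (f g : ↥Ggrp) : ℝ :=
  (nrmS (suppP ((f : Equiv.Perm (ℕ × ℕ))⁻¹ * (g : Equiv.Perm (ℕ × ℕ))))).toReal

/-- The action of `G` on `H`: `g • h = h ∘ g⁻¹`. -/
noncomputable def actGH (g : ↥Ggrp) (h : ↥Hgrp) : ↥Hgrp :=
  ⟨fun p => (h : (ℕ × ℕ) → ZMod 2) (((g : Equiv.Perm (ℕ × ℕ)))⁻¹ p), by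
    have hsub : suppZ (fun p => (h : (ℕ × ℕ) → ZMod 2) (((g : Equiv.Perm (ℕ × ℕ)))⁻¹ p)) ⊆
        suppZ (h : (ℕ × ℕ) → ZMod 2) ∪ suppP (g : Equiv.Perm (ℕ × ℕ)) := by
      intro p hp
      by_cases hgp : ((g : Equiv.Perm (ℕ × ℕ)))⁻¹ p = p
      · left
        have : (h : (ℕ × ℕ) → ZMod 2) (((g : Equiv.Perm (ℕ × ℕ)))⁻¹ p) = 1 := hp
        rwa [hgp] at this
      · right
        have : p ∈ suppP ((g : Equiv.Perm (ℕ × ℕ)))⁻¹ := hgp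
        rwa [suppP_inv] at this
    show nrmZ _ < ⊤
    calc nrmZ _ ≤ nrmS (suppZ (h : (ℕ × ℕ) → ZMod 2) ∪ suppP (g : Equiv.Perm (ℕ × ℕ))) :=
          nrmS_mono hsub
      _ ≤ nrmZ (h : (ℕ × ℕ) → ZMod 2) + nrmS (suppP (g : Equiv.Perm (ℕ × ℕ))) :=
          nrmS_union_le _ _
      _ < ⊤ := ENNReal.add_lt_top.2 ⟨h.2, g.2⟩⟩
def colEquiv (c : ℕ) : ℕ ≃ {p : ℕ × ℕ | p.2 = c} where
  toFun := fun i => ⟨(i, c), rfl⟩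
  invFun := fun p => p.1.1
  left_inv := fun _ => rfl
  right_inv := fun p => Subtype.ext (Prod.ext rfl p.2.symm)

lemma nrmS_column_lt_top (c : ℕ) : nrmS {p : ℕ × ℕ | p.2 = c} < ⊤ := by
  set e := colEquiv c with he
  have h0 : nrmS {p : ℕ × ℕ | p.2 = c} = ∑' i : ℕ, wt ((e i : ℕ × ℕ)) := by
    rw [nrmS, ← tsum_subtype]
    exact (Equiv.tsum_eq e fun p => wt (p : ℕ × ℕ)).symm
  have h1 : nrmS {p : ℕ × ℕ | p.2 = c} = ∑' i : ℕ, wt (i, c) := h0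
  rw [h1]
  have h2 : ∀ i : ℕ, wt (i, c) = ((3 : ℝ≥0∞)⁻¹) ^ i * (2 * 3⁻¹) := by
    intro i
    rw [wt, pow_succ, ENNReal.mul_inv (Or.inr (by norm_num)) (Or.inr (by norm_num)),
      ← ENNReal.inv_pow]
    ring
  simp_rw [h2]
  rw [ENNReal.tsum_mul_right, ENNReal.tsum_geometric]
  refine ENNReal.mul_lt_top ?_ ?_
  · rw [lt_top_iff_ne_top]
    refine ENNReal.inv_ne_top.2 ?_
    rw [ne_eq, tsub_eq_zero_iff_le, not_le]
    exact ENNReal.inv_lt_one.2 (by norm_num)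
  · exact ENNReal.mul_lt_top (by norm_num) (by simp [ENNReal.inv_lt_top])

/-- The topology on `G` induced by the metric `d`: the topology generated by the open balls
of `d`. -/
noncomputable def tG : TopologicalSpace ↥Ggrp :=
  TopologicalSpace.generateFrom
    {s | ∃ (f : ↥Ggrp) (ε : ℝ), 0 < ε ∧ s = {g : ↥Ggrp | dG f g < ε}}

/-- The topology on `H` induced by the metric `d_H`: the topology generated by the open
balls of `d_H`. -/
noncomputable def tH : TopologicalSpace ↥Hgrp :=
  TopologicalSpace.generateFrom
    {s | ∃ (z : ↥Hgrp) (ε : ℝ), 0 < ε ∧ s = {w : ↥Hgrp | dH z w < ε}}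

/-- The element `a ∈ H` given by `a (i,j) = 1` iff `j = 0`. -/
noncomputable def aElt : ↥Hgrp :=
  ⟨fun p => if p.2 = 0 then 1 else 0, by
    show nrmZ _ < ⊤
    refine lt_of_le_of_lt (nrmS_mono ?_) (nrmS_column_lt_top 0)
    intro p hp
    by_contra hc
    simp only [suppZ, Set.mem_setOf_eq] at hp
    rw [if_neg (show ¬ p.2 = 0 from hc)] at hp
    exact absurd hp (by decide)⟩

/-- The element `b_n ∈ H` given by `b_n (i,j) = 1` iff `j = n + 1`. -/
noncomputable def bElt (n : ℕ) : ↥Hgrp :=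
  ⟨fun p => if p.2 = n + 1 then 1 else 0, by
    show nrmZ _ < ⊤
    refine lt_of_le_of_lt (nrmS_mono ?_) (nrmS_column_lt_top (n + 1))
    intro p hp
    by_contra hc
    simp only [suppZ, Set.mem_setOf_eq] at hp
    rw [if_neg (show ¬ p.2 = n + 1 from hc)] at hp
    exact absurd hp (by decide)⟩

/-- The set `{b_0, …, b_{n-1}} ⊆ H`. -/
noncomputable def bSet (n : ℕ) : Set ↥Hgrp := {x | ∃ k < n, x = bElt k}

lemma actGH_one (h : ↥Hgrp) : actGH 1 h = h := by
  apply Subtype.ext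
  funext p
  show (h : (ℕ × ℕ) → ZMod 2) (((1 : Equiv.Perm (ℕ × ℕ)))⁻¹ p) = _
  simp

lemma actGH_mul (g₁ g₂ : ↥Ggrp) (h : ↥Hgrp) :
    actGH (g₁ * g₂) h = actGH g₁ (actGH g₂ h) := by
  apply Subtype.ext
  funext p
  show (h : (ℕ × ℕ) → ZMod 2) (((g₁ : Equiv.Perm (ℕ × ℕ)) * (g₂ : Equiv.Perm (ℕ × ℕ)))⁻¹ p)
      = (h : (ℕ × ℕ) → ZMod 2) ((g₂ : Equiv.Perm (ℕ × ℕ))⁻¹ ((g₁ : Equiv.Perm (ℕ × ℕ))⁻¹ p))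
  rw [mul_inv_rev, Equiv.Perm.mul_apply]

/-- The pointwise stabilizer `G_C ≤ G` of a set `C ⊆ H`. -/
noncomputable def fixH (C : Set ↥Hgrp) : Subgroup ↥Ggrp where
  carrier := {g | ∀ c ∈ C, actGH g c = c}
  one_mem' := fun c _ => actGH_one c
  mul_mem' {g₁ g₂} h₁ h₂ := fun c hc => by rw [actGH_mul, h₂ c hc, h₁ c hc]
  inv_mem' {g} hg := fun c hc => by
    conv_lhs => rw [← hg c hc]
    rw [← actGH_mul, inv_mul_cancel, actGH_one]

/-- The orbit `o(a/C)` of `a ∈ H` under the pointwise stabilizer `G_C`. -/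
noncomputable def orbitOverH (C : Set ↥Hgrp) (a : ↥Hgrp) : Set ↥Hgrp :=
  {x | ∃ g ∈ fixH C, actGH g a = x}

/-- `a ⫝_A B` in `(H,G)`: the set of those `g ∈ G_A` with `g • a ∈ o(a/A ∪ B)` is
non-meager in `G_A` (with the subspace topology from the metric topology of `G`). -/
noncomputable def NMIndepH (a : ↥Hgrp) (A B : Set ↥Hgrp) : Prop :=
  ¬ @IsMeagre ↥(fixH A) (@instTopologicalSpaceSubtype ↥Ggrp _ tG)
      {g : ↥(fixH A) | actGH (g : ↥Ggrp) a ∈ orbitOverH (A ∪ B) a}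

/-! Everything rests on one move. For `g` in the stabilizer of `b_0, …, b_{n-1}`, composing `g`
with the swap of `g (k, 0)` and `(r, n + 1)` stays in the stabilizer (neither point lies in the
columns `1, …, n`), sends `(k, 0)` into column `n + 1`, and moves `g` (and `g • a`) by at most
the weights of the two swapped points, which are small for large `k` and `r` because
`‖supp g‖ < ∞`. Now `o(a/{b_0, …, b_n})` lies in the closed set of orbit points with empty
column `n + 1`, and the `g` with `g • a` in that orbit lie in the closed set of `g` mapping no
point of column `0` into column `n + 1`; the move shows that both closed sets have empty
interior. -/

open Filter Topology

lemma wt_ne_top (p : ℕ × ℕ) : wt p ≠ ⊤ :=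
  ENNReal.mul_ne_top (by norm_num) (ENNReal.inv_ne_top.2 (by positivity))

lemma nrmS_singleton (p : ℕ × ℕ) : nrmS {p} = wt p := by
  simp [nrmS, Set.indicator_singleton]

lemma nrmS_le_of_subset_pair {S : Set (ℕ × ℕ)} {p q : ℕ × ℕ} (h : S ⊆ {p, q}) :
    nrmS S ≤ wt p + wt q := by
  calc nrmS S ≤ nrmS ({p} ∪ {q}) := nrmS_mono h
    _ ≤ wt p + wt q := by simpa only [nrmS_singleton] using nrmS_union_le {p} {q}

lemma eventually_wt_lt {δ : ℝ≥0∞} (hδ : δ ≠ 0) (j : ℕ) : ∀ᶠ i in atTop, wt (i, j) < δ := by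
  have h : Tendsto (fun i : ℕ => 2 * (3 : ℝ≥0∞)⁻¹ ^ (i + 1)) atTop (nhds (2 * 0)) :=
    ENNReal.Tendsto.const_mul ((ENNReal.tendsto_pow_atTop_nhds_zero_of_lt_one
      (by norm_num)).comp (tendsto_add_atTop_nat 1)) (Or.inr (by norm_num))
  rw [mul_zero] at h
  filter_upwards [(tendsto_order.1 h).2 δ (pos_iff_ne_zero.2 hδ)] with i hi
  simpa [wt, ENNReal.inv_pow] using hi

lemma eventually_wt_apply_lt {g : Equiv.Perm (ℕ × ℕ)} (hg : nrmS (suppP g) ≠ ⊤)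
    {δ : ℝ≥0∞} (hδ : δ ≠ 0) (j : ℕ) : ∀ᶠ r in atTop, wt (g (r, j)) < δ := by
  have hfin : {q | δ ≤ (suppP g).indicator wt q}.Finite :=
    ENNReal.finite_const_le_of_tsum_ne_top hg hδ
  have hinj : Function.Injective fun r : ℕ => g (r, j) :=
    fun r s h => congrArg Prod.fst (g.injective h)
  have hcof : ∀ᶠ r in atTop, δ > (suppP g).indicator wt (g (r, j)) := by
    rw [← Nat.cofinite_eq_atTop]
    simpa [not_le] using (hfin.preimage hinj.injOn).compl_mem_cofinite
  filter_upwards [hcof, eventually_wt_lt hδ j] with r hr hr'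
  by_cases hmem : g (r, j) ∈ suppP g
  · rwa [Set.indicator_of_mem hmem] at hr
  · rwa [g.injective (not_not.1 hmem)]

section BallTopology

variable {α : Type*} [t : TopologicalSpace α] {d : α → α → ℝ}

-- `tG` and `tH` are literally `generateFrom (ballsOf dG)` and `generateFrom (ballsOf dH)`.
def ballsOf (d : α → α → ℝ) : Set (Set α) := {s | ∃ z ε, 0 < ε ∧ s = {w | d z w < ε}}

lemma exists_ball_subset_of_isOpen (ht : t = .generateFrom (ballsOf d))
    (htri : ∀ x y z, d x z ≤ d x y + d y z) {U : Set α} (hU : IsOpen U) :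
    ∀ x ∈ U, ∃ ε > 0, {y | d x y < ε} ⊆ U := by
  subst ht
  induction hU with
  | basic s hs =>
    obtain ⟨z, ε, -, rfl⟩ := hs
    intro x hx
    refine ⟨ε - d z x, sub_pos.2 hx, fun y (hy : d x y < ε - d z x) => ?_⟩
    show d z y < ε
    linarith [htri z x y]
  | univ => exact fun x _ => ⟨1, one_pos, Set.subset_univ _⟩
  | inter s u _ _ ihs ihu =>
    rintro x ⟨hxs, hxu⟩
    obtain ⟨ε, hε, hs⟩ := ihs x hxs
    obtain ⟨η, hη, hu⟩ := ihu x hxu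
    exact ⟨min ε η, lt_min hε hη, fun y (hy : d x y < min ε η) =>
      ⟨hs (lt_min_iff.1 hy).1, hu (lt_min_iff.1 hy).2⟩⟩
  | sUnion S _ ih =>
    rintro x ⟨s, hsS, hxs⟩
    obtain ⟨ε, hε, hsub⟩ := ih s hsS x hxs
    exact ⟨ε, hε, hsub.trans (Set.subset_sUnion_of_mem hsS)⟩

lemma isOpen_ball_of_pos (ht : t = .generateFrom (ballsOf d)) (x : α) {ε : ℝ} (hε : 0 < ε) :
    IsOpen {y | d x y < ε} :=
  ht ▸ TopologicalSpace.isOpen_generateFrom_of_mem ⟨x, ε, hε, rfl⟩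

lemma isOpen_of_forall_ball (ht : t = .generateFrom (ballsOf d)) (hself : ∀ x, d x x = 0)
    {U : Set α} (h : ∀ x ∈ U, ∃ ε > 0, {y | d x y < ε} ⊆ U) : IsOpen U := by
  refine isOpen_iff_forall_mem_open.2 fun x hx => ?_
  obtain ⟨ε, hε, hsub⟩ := h x hx
  exact ⟨_, hsub, isOpen_ball_of_pos ht x hε, by simpa [hself x] using hε⟩

lemma mem_closure_of_forall_dist_lt (ht : t = .generateFrom (ballsOf d))
    (htri : ∀ x y z, d x z ≤ d x y + d y z) {p : α → Prop} {s : Set (Subtype p)}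
    {x : Subtype p} (h : ∀ ε > 0, ∃ y ∈ s, d x y < ε) : x ∈ closure s := by
  rw [mem_closure_iff]
  rintro _ ⟨V, hV, rfl⟩ hxV
  obtain ⟨ε, hε, hsub⟩ := exists_ball_subset_of_isOpen ht htri hV x hxV
  obtain ⟨y, hys, hy⟩ := h ε hε
  exact ⟨y, hsub hy, hys⟩

lemma isNowhereDense_of_forall_dist_lt (ht : t = .generateFrom (ballsOf d))
    (htri : ∀ x y z, d x z ≤ d x y + d y z) {p : α → Prop} {C : Set (Subtype p)}
    (hC : IsClosed C) (h : ∀ x : Subtype p, ∀ ε > 0, ∃ y ∉ C, d x y < ε) :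
    IsNowhereDense C :=
  hC.isNowhereDense_iff.2 <| interior_eq_empty_iff_dense_compl.2 fun x =>
    mem_closure_of_forall_dist_lt ht htri (h x)

end BallTopology

lemma suppP_inv_mul (f g : Equiv.Perm (ℕ × ℕ)) : suppP (f⁻¹ * g) = {p | g p ≠ f p} := by
  ext p
  simp [suppP, Equiv.symm_apply_eq]

lemma suppP_swap_subset (p q : ℕ × ℕ) : suppP (Equiv.swap p q) ⊆ {p, q} := by
  intro x hx
  by_contra hpq
  simp only [Set.mem_insert_iff, Set.mem_singleton_iff, not_or] at hpq
  exact hx (Equiv.swap_apply_of_ne_of_ne hpq.1 hpq.2)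

lemma nrmS_suppP_inv_mul_ne_top (f g : ↥Ggrp) :
    nrmS (suppP ((f : Equiv.Perm (ℕ × ℕ))⁻¹ * g)) ≠ ⊤ :=
  (f⁻¹ * g).2.ne

lemma dG_self (g : ↥Ggrp) : dG g g = 0 := by
  simp [dG, suppP, nrmS]

lemma dG_triangle (f g h : ↥Ggrp) : dG f h ≤ dG f g + dG g h := by
  rw [dG, dG, dG, ← ENNReal.toReal_add (nrmS_suppP_inv_mul_ne_top f g)
    (nrmS_suppP_inv_mul_ne_top g h)]
  refine ENNReal.toReal_mono (ENNReal.add_ne_top.2 ⟨nrmS_suppP_inv_mul_ne_top f g,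
    nrmS_suppP_inv_mul_ne_top g h⟩) ((nrmS_mono fun p hp => ?_).trans (nrmS_union_le _ _))
  simp only [suppP_inv_mul, Set.mem_union, Set.mem_ofPred_eq] at hp ⊢
  by_contra! hfg
  exact hp (hfg.2.trans hfg.1)

lemma apply_eq_of_dG_lt {f g : ↥Ggrp} {p : ℕ × ℕ} (h : dG f g < (wt p).toReal) :
    (f : Equiv.Perm (ℕ × ℕ)) p = (g : Equiv.Perm (ℕ × ℕ)) p := by
  by_contra hne
  have hp : p ∈ suppP ((f : Equiv.Perm (ℕ × ℕ))⁻¹ * g) := by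
    rw [suppP_inv_mul]
    exact Ne.symm hne
  have hle : wt p ≤ nrmS (suppP ((f : Equiv.Perm (ℕ × ℕ))⁻¹ * g)) := by
    have := ENNReal.le_tsum (f := (suppP ((f : Equiv.Perm (ℕ × ℕ))⁻¹ * g)).indicator wt) p
    rwa [Set.indicator_of_mem hp] at this
  exact (ENNReal.toReal_mono (nrmS_suppP_inv_mul_ne_top f g) hle).not_gt h

lemma Ggrp.isClosed_setOf_apply (p : ℕ × ℕ) (Q : ℕ × ℕ → Prop) :
    IsClosed[tG] {g : ↥Ggrp | Q ((g : Equiv.Perm (ℕ × ℕ)) p)} := by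
  let _ : TopologicalSpace ↥Ggrp := tG
  refine ⟨isOpen_of_forall_ball rfl dG_self fun g hg => ?_⟩
  refine ⟨(wt p).toReal, ENNReal.toReal_pos (by simp [wt]) (wt_ne_top p), fun h hh => ?_⟩
  simpa [← apply_eq_of_dG_lt hh] using hg

noncomputable def swapG (p q : ℕ × ℕ) : ↥Ggrp :=
  ⟨Equiv.swap p q, (nrmS_le_of_subset_pair (suppP_swap_subset p q)).trans_lt
    (ENNReal.add_lt_top.2 ⟨(wt_ne_top p).lt_top, (wt_ne_top q).lt_top⟩)⟩

lemma dG_swapG_mul_le (g : ↥Ggrp) (p q : ℕ × ℕ) :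
    dG g (swapG p q * g) ≤
      (wt ((g : Equiv.Perm (ℕ × ℕ))⁻¹ p) + wt ((g : Equiv.Perm (ℕ × ℕ))⁻¹ q)).toReal := by
  refine ENNReal.toReal_mono (ENNReal.add_ne_top.2 ⟨wt_ne_top _, wt_ne_top _⟩)
    (nrmS_le_of_subset_pair fun x hx => ?_)
  have hgx : (g : Equiv.Perm (ℕ × ℕ)) x ∈ ({p, q} : Set (ℕ × ℕ)) :=
    suppP_swap_subset p q (by simpa [suppP_inv_mul, swapG] using hx :
      Equiv.swap p q ((g : Equiv.Perm (ℕ × ℕ)) x) ≠ (g : Equiv.Perm (ℕ × ℕ)) x)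
  rcases hgx with rfl | rfl <;> simp

lemma ZMod.abs_val_sub_val_two (a b : ZMod 2) : |(a.val : ℝ) - b.val| = (a + b).val := by
  fin_cases a <;> fin_cases b <;> norm_num [ZMod.val] <;> norm_cast

lemma ZMod.val_two_le_one (a : ZMod 2) : (a.val : ℝ) ≤ 1 := by
  exact_mod_cast Nat.lt_succ_iff.1 a.val_lt

lemma hasSum_two_mul_inv_three_pow : HasSum (fun i : ℕ => 2 * ((3 : ℝ) ^ (i + 1))⁻¹) 1 := by
  have h := (hasSum_geometric_of_lt_one (r := (3 : ℝ)⁻¹) (by norm_num) (by norm_num)).mul_left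
    (2 / 3)
  rw [show 2 / 3 * (1 - (3 : ℝ)⁻¹)⁻¹ = 1 by norm_num] at h
  refine (funext fun i => ?_ : (fun i : ℕ => 2 * ((3 : ℝ) ^ (i + 1))⁻¹) = _) ▸ h
  rw [pow_succ, mul_inv, inv_pow]
  ring

lemma summable_phiC_term (x : ℕ → ZMod 2) :
    Summable fun i => 2 * ((x i).val : ℝ) * ((3 : ℝ) ^ (i + 1))⁻¹ :=
  hasSum_two_mul_inv_three_pow.summable.of_nonneg_of_le (fun i => by positivity) fun i => by
    have := ZMod.val_two_le_one (x i)
    have : (0 : ℝ) < ((3 : ℝ) ^ (i + 1))⁻¹ := by positivity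
    nlinarith

lemma phiC_nonneg (x : ℕ → ZMod 2) : 0 ≤ phiC x :=
  tsum_nonneg fun i => by positivity

lemma phiC_le_one (x : ℕ → ZMod 2) : phiC x ≤ 1 :=
  hasSum_two_mul_inv_three_pow.tsum_eq ▸ (summable_phiC_term x).tsum_le_tsum (fun i => by
    have := ZMod.val_two_le_one (x i)
    have : (0 : ℝ) < ((3 : ℝ) ^ (i + 1))⁻¹ := by positivity
    nlinarith) hasSum_two_mul_inv_three_pow.summable

lemma phiC_eq_div_three (x : ℕ → ZMod 2) :
    phiC x = (2 * (x 0).val + phiC fun i => x (i + 1)) / 3 := by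
  rw [phiC, (summable_phiC_term x).tsum_eq_zero_add, phiC, add_div, ← tsum_div_const]
  congr 1
  · ring
  · congr 1; ext i; rw [pow_succ]; field_simp

lemma inv_three_le_abs_phiC_sub {x y : ℕ → ZMod 2} (h : x 0 ≠ y 0) :
    3⁻¹ ≤ |phiC x - phiC y| := by
  have hxy : |((x 0).val : ℝ) - (y 0).val| = 1 := by
    have hsum : ∀ a b : ZMod 2, a ≠ b → a + b = 1 := by decide
    rw [ZMod.abs_val_sub_val_two, hsum _ _ h, ZMod.val_one, Nat.cast_one]
  have htail : |(phiC fun i => x (i + 1)) - phiC fun i => y (i + 1)| ≤ 1 := by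
    rw [abs_sub_le_iff]
    constructor <;> linarith [phiC_nonneg (fun i => x (i + 1)), phiC_nonneg (fun i => y (i + 1)),
      phiC_le_one (fun i => x (i + 1)), phiC_le_one (fun i => y (i + 1))]
  rw [phiC_eq_div_three x, phiC_eq_div_three y, le_abs]
  rw [abs_le] at htail
  rcases (abs_eq zero_le_one).1 hxy with h1 | h1
  · left; linarith
  · right; linarith

lemma inv_three_pow_le_abs_phiC_sub {x y : ℕ → ZMod 2} {k : ℕ} (h : x k ≠ y k) :
    ((3 : ℝ) ^ (k + 1))⁻¹ ≤ |phiC x - phiC y| := by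
  induction k generalizing x y with
  | zero => simpa using inv_three_le_abs_phiC_sub h
  | succ k ih =>
    by_cases h0 : x 0 = y 0
    · have hdiff : phiC x - phiC y = ((phiC fun i => x (i + 1)) - phiC fun i => y (i + 1)) / 3 := by
        rw [phiC_eq_div_three x, phiC_eq_div_three y, h0]
        ring
      rw [hdiff, abs_div, abs_of_pos (by norm_num : (0 : ℝ) < 3), pow_succ, mul_inv]
      linarith [ih (x := fun i => x (i + 1)) (y := fun i => y (i + 1)) h]
    · refine le_trans ?_ (inv_three_le_abs_phiC_sub h0)
      exact inv_anti₀ (by norm_num) (le_self_pow₀ (by norm_num) (by omega))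

lemma abs_phiC_sub_le (x y : ℕ → ZMod 2) : |phiC x - phiC y| ≤ phiC (x + y) := by
  have hterm : (fun i => |2 * ((x i).val : ℝ) * ((3 : ℝ) ^ (i + 1))⁻¹ -
      2 * ((y i).val : ℝ) * ((3 : ℝ) ^ (i + 1))⁻¹|) =
      fun i => 2 * (((x + y) i).val : ℝ) * ((3 : ℝ) ^ (i + 1))⁻¹ := by
    ext i
    rw [← sub_mul, ← mul_sub, abs_mul, abs_mul, ZMod.abs_val_sub_val_two, abs_two,
      abs_of_pos (by positivity), Pi.add_apply]
  have hs := summable_phiC_term (x + y)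
  rw [← hterm] at hs
  rw [phiC, phiC, phiC, ← (summable_phiC_term x).tsum_sub (summable_phiC_term y), ← hterm]
  simpa only [Real.norm_eq_abs] using norm_tsum_le_tsum_norm
    (f := fun i => 2 * ((x i).val : ℝ) * ((3 : ℝ) ^ (i + 1))⁻¹ -
      2 * ((y i).val : ℝ) * ((3 : ℝ) ^ (i + 1))⁻¹) (by simpa only [Real.norm_eq_abs] using hs)

lemma toReal_indicator_suppZ (u : ℕ × ℕ → ZMod 2) (p : ℕ × ℕ) :
    ((suppZ u).indicator wt p).toReal = 2 * ((u p).val : ℝ) * ((3 : ℝ) ^ (p.1 + 1))⁻¹ := by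
  rcases (by decide : ∀ a : ZMod 2, a = 0 ∨ a = 1) (u p) with h | h
  · simp [Set.indicator_of_notMem, suppZ, h]
  · simp [Set.indicator_of_mem, suppZ, h, wt, ZMod.val_one]

lemma hasSum_phiC_col (u : ℕ × ℕ → ZMod 2) (hu : nrmZ u ≠ ⊤) :
    HasSum (fun j => phiC fun i => u (i, j)) (nrmZ u).toReal := by
  have hcols : nrmZ u = ∑' j, ∑' i, (suppZ u).indicator wt (i, j) := by
    rw [nrmZ, nrmS, ENNReal.tsum_prod', ENNReal.tsum_comm]
  have hcol : ∀ j, (phiC fun i => u (i, j)) = (∑' i, (suppZ u).indicator wt (i, j)).toReal := by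
    intro j
    rw [phiC, ENNReal.tsum_toReal_eq fun i => ?_]
    · simp only [toReal_indicator_suppZ]
    · exact ((Set.indicator_le_self _ _ _).trans_lt (wt_ne_top _).lt_top).ne
  rw [hcols] at hu ⊢
  simp only [hcol]
  rw [ENNReal.tsum_toReal_eq (ENNReal.ne_top_of_tsum_ne_top hu)]
  exact (ENNReal.summable_toReal hu).hasSum

lemma nrmZ_add_ne_top (z w : ↥Hgrp) : nrmZ (z + w : ℕ × ℕ → ZMod 2) ≠ ⊤ := by
  simpa using (z + w).2.ne

lemma summable_abs_phiC_col_sub (z w : ↥Hgrp) :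
    Summable fun j => |(phiC fun i => (z : ℕ × ℕ → ZMod 2) (i, j)) -
      phiC fun i => (w : ℕ × ℕ → ZMod 2) (i, j)| :=
  (hasSum_phiC_col _ (nrmZ_add_ne_top z w)).summable.of_nonneg_of_le (fun _ => abs_nonneg _)
    fun j => abs_phiC_sub_le (fun i => (z : ℕ × ℕ → ZMod 2) (i, j))
      (fun i => (w : ℕ × ℕ → ZMod 2) (i, j))

lemma dH_le_nrmZ_add (z w : ↥Hgrp) : dH z w ≤ (nrmZ (z + w : ℕ × ℕ → ZMod 2)).toReal := by
  rw [dH]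
  refine hasSum_le (fun j => ?_) (summable_abs_phiC_col_sub z w).hasSum
    (hasSum_phiC_col ((z : ℕ × ℕ → ZMod 2) + w) (nrmZ_add_ne_top z w))
  exact abs_phiC_sub_le (fun i => (z : ℕ × ℕ → ZMod 2) (i, j)) (fun i => (w : ℕ × ℕ → ZMod 2) (i, j))

lemma dH_self (z : ↥Hgrp) : dH z z = 0 := by
  simp [dH]

lemma dH_triangle (u v w : ↥Hgrp) : dH u w ≤ dH u v + dH v w := by
  rw [dH, dH, dH, ← (summable_abs_phiC_col_sub u v).tsum_add (summable_abs_phiC_col_sub v w)]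
  exact (summable_abs_phiC_col_sub u w).tsum_le_tsum (fun j => abs_sub_le _ _ _)
    ((summable_abs_phiC_col_sub u v).add (summable_abs_phiC_col_sub v w))

lemma apply_eq_of_dH_lt {z w : ↥Hgrp} {p : ℕ × ℕ} (h : dH z w < ((3 : ℝ) ^ (p.1 + 1))⁻¹) :
    (z : ℕ × ℕ → ZMod 2) p = (w : ℕ × ℕ → ZMod 2) p := by
  by_contra hne
  have hcol := (summable_abs_phiC_col_sub z w).le_tsum p.2 fun _ _ => abs_nonneg _
  have hdigit := inv_three_pow_le_abs_phiC_sub (x := fun i => (z : ℕ × ℕ → ZMod 2) (i, p.2))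
    (y := fun i => (w : ℕ × ℕ → ZMod 2) (i, p.2)) (k := p.1) hne
  exact (hdigit.trans hcol).not_gt h

lemma Hgrp.isClosed_setOf_apply (p : ℕ × ℕ) (Q : ZMod 2 → Prop) :
    IsClosed[tH] {x : ↥Hgrp | Q ((x : ℕ × ℕ → ZMod 2) p)} := by
  let _ : TopologicalSpace ↥Hgrp := tH
  refine ⟨isOpen_of_forall_ball rfl dH_self fun x hx => ?_⟩
  refine ⟨((3 : ℝ) ^ (p.1 + 1))⁻¹, by positivity, fun y hy => ?_⟩
  simpa [← apply_eq_of_dH_lt hy] using hx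

lemma dH_actGH_le (σ : ↥Ggrp) (x : ↥Hgrp) : dH x (actGH σ x) ≤ (nrmS (suppP σ)).toReal := by
  refine (dH_le_nrmZ_add _ _).trans (ENNReal.toReal_mono σ.2.ne (nrmS_mono fun p hp hfix => ?_))
  have hinv : (σ : Equiv.Perm (ℕ × ℕ))⁻¹ p = p := by rw [Equiv.Perm.inv_eq_iff_eq, hfix]
  have hp' : (x : ℕ × ℕ → ZMod 2) p + (x : ℕ × ℕ → ZMod 2) ((σ : Equiv.Perm (ℕ × ℕ))⁻¹ p) = 1 :=
    hp
  rw [hinv, CharTwo.add_self_eq_zero] at hp'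
  exact zero_ne_one hp'

lemma dH_actGH_swapG_le (p q : ℕ × ℕ) (x : ↥Hgrp) :
    dH x (actGH (swapG p q) x) ≤ (wt p + wt q).toReal :=
  (dH_actGH_le _ _).trans (ENNReal.toReal_mono (ENNReal.add_ne_top.2 ⟨wt_ne_top _, wt_ne_top _⟩)
    (nrmS_le_of_subset_pair (suppP_swap_subset p q)))

lemma actGH_apply (g : ↥Ggrp) (z : ↥Hgrp) (p : ℕ × ℕ) :
    (actGH g z : ℕ × ℕ → ZMod 2) p = (z : ℕ × ℕ → ZMod 2) ((g : Equiv.Perm (ℕ × ℕ))⁻¹ p) :=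
  rfl

@[simp]
lemma actGH_apply_apply (g : ↥Ggrp) (z : ↥Hgrp) (p : ℕ × ℕ) :
    (actGH g z : ℕ × ℕ → ZMod 2) ((g : Equiv.Perm (ℕ × ℕ)) p) = (z : ℕ × ℕ → ZMod 2) p := by
  simp [actGH_apply]

lemma actGH_swapG_of_eq_zero {z : ↥Hgrp} {p q : ℕ × ℕ} (hp : (z : ℕ × ℕ → ZMod 2) p = 0)
    (hq : (z : ℕ × ℕ → ZMod 2) q = 0) : actGH (swapG p q) z = z := by
  refine Subtype.ext (funext fun x => ?_)
  simp only [actGH_apply, swapG, Equiv.swap_inv, Equiv.swap_apply_def]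
  split_ifs with h₁ h₂ <;> simp_all

lemma bElt_apply (k : ℕ) (p : ℕ × ℕ) :
    (bElt k : ℕ × ℕ → ZMod 2) p = if p.2 = k + 1 then 1 else 0 :=
  rfl

lemma swapG_mem_fixH_bSet {m : ℕ} {p q : ℕ × ℕ} (hp : ∀ k < m, p.2 ≠ k + 1)
    (hq : ∀ k < m, q.2 ≠ k + 1) : swapG p q ∈ fixH (bSet m) := by
  rintro _ ⟨k, hk, rfl⟩
  exact actGH_swapG_of_eq_zero (if_neg (hp k hk)) (if_neg (hq k hk))

lemma snd_apply_eq_iff_of_mem_fixH_bSet {m k : ℕ} {g : ↥Ggrp} (hg : g ∈ fixH (bSet m))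
    (hk : k < m) (p : ℕ × ℕ) : ((g : Equiv.Perm (ℕ × ℕ)) p).2 = k + 1 ↔ p.2 = k + 1 := by
  have h := congrArg (fun z : ↥Hgrp => (z : ℕ × ℕ → ZMod 2) ((g : Equiv.Perm (ℕ × ℕ)) p))
    (hg (bElt k) ⟨k, hk, rfl⟩)
  simp only [actGH_apply_apply, bElt_apply] at h
  split_ifs at h with h₁ h₂ <;> simp_all

lemma apply_eq_zero_of_mem_orbitOverH {m k : ℕ} {x : ↥Hgrp}
    (hx : x ∈ orbitOverH (bSet m) aElt) (hk : k < m) {p : ℕ × ℕ} (hp : p.2 = k + 1) :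
    (x : ℕ × ℕ → ZMod 2) p = 0 := by
  obtain ⟨g, hg, rfl⟩ := hx
  have hcol := (snd_apply_eq_iff_of_mem_fixH_bSet hg hk ((g : Equiv.Perm (ℕ × ℕ))⁻¹ p)).1
    (by simpa using hp)
  exact if_neg (by omega)

lemma swapG_mul_mem_fixH_bSet {n : ℕ} {g : ↥Ggrp} (hg : g ∈ fixH (bSet n)) (k r : ℕ) :
    swapG ((g : Equiv.Perm (ℕ × ℕ)) (k, 0)) (r, n + 1) * g ∈ fixH (bSet n) := by
  refine mul_mem (swapG_mem_fixH_bSet (fun j hj hcol => ?_) fun j hj => by simp; omega) hg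
  simpa using (snd_apply_eq_iff_of_mem_fixH_bSet hg hj (k, 0)).1 hcol

lemma swapG_mul_apply (g : ↥Ggrp) (k r n : ℕ) :
    ((swapG ((g : Equiv.Perm (ℕ × ℕ)) (k, 0)) (r, n + 1) * g : ↥Ggrp) : Equiv.Perm (ℕ × ℕ))
      (k, 0) = (r, n + 1) := by
  simp [swapG]

lemma toReal_add_lt_of_lt_half {a b : ℝ≥0∞} {ε : ℝ} (ha : a < ENNReal.ofReal ε / 2)
    (hb : b < ENNReal.ofReal ε / 2) : (a + b).toReal < ε :=
  ENNReal.toReal_lt_of_lt_ofReal ((ENNReal.add_lt_add ha hb).trans_eq (ENNReal.add_halves _))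

lemma isNowhereDense_orbitOverH_succ (n : ℕ) :
    @IsNowhereDense ↥(orbitOverH (bSet n) aElt) (@instTopologicalSpaceSubtype ↥Hgrp _ tH)
      {x : ↥(orbitOverH (bSet n) aElt) | (x : ↥Hgrp) ∈ orbitOverH (bSet (n + 1)) aElt} := by
  let _ : TopologicalSpace ↥Hgrp := tH
  let C : Set ↥(orbitOverH (bSet n) aElt) :=
    Subtype.val ⁻¹' ⋂ i, {x : ↥Hgrp | (x : ℕ × ℕ → ZMod 2) (i, n + 1) = 0}
  have hC : IsClosed C := (isClosed_iInter fun i =>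
    Hgrp.isClosed_setOf_apply (i, n + 1) (· = 0)).preimage continuous_subtype_val
  refine IsNowhereDense.mono (s := C) (fun x hx => Set.mem_iInter.2 fun i =>
    apply_eq_zero_of_mem_orbitOverH hx (lt_add_one n) rfl)
    (isNowhereDense_of_forall_dist_lt rfl dH_triangle hC fun x ε hε => ?_)
  obtain ⟨g, hg, hgx⟩ := x.2
  have hδ : ENNReal.ofReal ε / 2 ≠ 0 := by simpa using hε
  obtain ⟨k, hk⟩ := (eventually_wt_apply_lt g.2.ne hδ 0).exists
  obtain ⟨r, hr⟩ := (eventually_wt_lt hδ (n + 1)).exists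
  set g' := swapG ((g : Equiv.Perm (ℕ × ℕ)) (k, 0)) (r, n + 1) * g
  refine ⟨⟨actGH g' aElt, g', swapG_mul_mem_fixH_bSet hg k r, rfl⟩, fun hy => ?_, ?_⟩
  · have h1 : (actGH g' aElt : ℕ × ℕ → ZMod 2) (r, n + 1) = 1 := by
      rw [← swapG_mul_apply g k r n, actGH_apply_apply]
      rfl
    exact one_ne_zero (h1.symm.trans (Set.mem_iInter.1 hy r))
  · show dH x (actGH g' aElt) < ε
    rw [actGH_mul, hgx]
    exact (dH_actGH_swapG_le _ _ _).trans_lt (toReal_add_lt_of_lt_half hk hr)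

lemma isNowhereDense_fixH_succ (n : ℕ) :
    @IsNowhereDense ↥(fixH (bSet n)) (@instTopologicalSpaceSubtype ↥Ggrp _ tG)
      {g : ↥(fixH (bSet n)) | actGH (g : ↥Ggrp) aElt ∈ orbitOverH (bSet (n + 1)) aElt} := by
  let _ : TopologicalSpace ↥Ggrp := tG
  let C : Set ↥(fixH (bSet n)) :=
    Subtype.val ⁻¹' ⋂ k, {g : ↥Ggrp | ((g : Equiv.Perm (ℕ × ℕ)) (k, 0)).2 ≠ n + 1}
  have hC : IsClosed C := (isClosed_iInter fun k =>
    Ggrp.isClosed_setOf_apply (k, 0) (·.2 ≠ n + 1)).preimage continuous_subtype_val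
  refine IsNowhereDense.mono (s := C) (fun g hg => Set.mem_iInter.2 fun k hk => ?_)
    (isNowhereDense_of_forall_dist_lt rfl dG_triangle hC fun g ε hε => ?_)
  · have h0 := apply_eq_zero_of_mem_orbitOverH hg (lt_add_one n) hk
    simp [aElt] at h0
  · have hδ : ENNReal.ofReal ε / 2 ≠ 0 := by simpa using hε
    obtain ⟨k, hk⟩ := (eventually_wt_lt hδ 0).exists
    obtain ⟨r, hr⟩ := (eventually_wt_apply_lt (g⁻¹ : ↥Ggrp).2.ne hδ (n + 1)).exists
    refine ⟨⟨_, swapG_mul_mem_fixH_bSet g.2 k r⟩, fun hg' => ?_, ?_⟩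
    · exact Set.mem_iInter.1 hg' k (congrArg Prod.snd (swapG_mul_apply g k r n))
    · refine (dG_swapG_mul_le _ _ _).trans_lt ?_
      simpa using toReal_add_lt_of_lt_half hk hr

lemma bSet_union_bSet_succ (n : ℕ) : bSet n ∪ bSet (n + 1) = bSet (n + 1) :=
  Set.union_eq_right.2 fun _ ⟨k, hk, hx⟩ => ⟨k, hk.trans (lt_add_one n), hx⟩

/-- Let `a ∈ H` be given by `a (i,j) = 1` iff `j = 0`, and for `n < ω` let
`b_n ∈ H` be given by `b_n (i,j) = 1` iff `j = n + 1`. Then for every `n < ω`, the orbit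
`o(a/{b_0,…,b_n})` is nowhere dense in the orbit `o(a/{b_0,…,b_{n-1}})` (with the subspace
topology from `(H, d_H)`), and `a` is nm-dependent on `{b_0,…,b_n}` over
`{b_0,…,b_{n-1}}`. -/
theorem statement18 (n : ℕ) :
    @IsNowhereDense ↥(orbitOverH (bSet n) aElt) (@instTopologicalSpaceSubtype ↥Hgrp _ tH)
      {x : ↥(orbitOverH (bSet n) aElt) | (x : ↥Hgrp) ∈ orbitOverH (bSet (n + 1)) aElt} ∧
    ¬ NMIndepH aElt (bSet n) (bSet (n + 1)) := by
  refine ⟨isNowhereDense_orbitOverH_succ n, ?_⟩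
  rw [NMIndepH, not_not, bSet_union_bSet_succ]
  let _ : TopologicalSpace ↥Ggrp := tG
  exact (isNowhereDense_fixH_succ n).isMeagre
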